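/- If γ is non-oscillating at O, then the unit gradient along the trajectory converges to minus the limit of secants: lim_{s→L} ν_f(γ(s)) = −ν. -/

import Mathlib

/-!
Non-oscillation makes every analytic function have eventually constant sign along `γ`. Applied to
`⟪∇f, v⟫² - c ⟪∇f, ∇f⟫` for every constant `c`, it shows that the bounded quantity
`⟪ν_f(γ s), v⟫²` is eventually on one side of every `c`, hence converges; applied to `⟪∇f, v⟫`, it
fixes the sign of `⟪ν_f(γ s), v⟫`. So every component of `ν_f ∘ γ`, hence `ν_f ∘ γ` itself,
converges to a unit vector `m`. As `γ' = ν_f ∘ γ` and `γ → 0`, the slope `(s - L)⁻¹ • γ s` tends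
to `m`, so the secants `‖γ s‖⁻¹ • γ s` tend to `-m`, i.e. `m = -ν`.
-/

open scoped RealInnerProductSpace Topology
open Filter Set

theorem exists_tendsto_of_forall_eventually_le_or_ge {ι α : Type*} [LinearOrder α]
    [TopologicalSpace α] [OrderTopology α] [DenselyOrdered α] {l : Filter ι} [l.NeBot]
    {w : ι → α} {K : Set α} (hK : IsCompact K) (hwK : ∀ᶠ s in l, w s ∈ K)
    (h : ∀ c, (∀ᶠ s in l, w s ≤ c) ∨ (∀ᶠ s in l, c ≤ w s)) :
    ∃ b, Tendsto w l (𝓝 b) := by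
  obtain ⟨b, -, hb⟩ := hK.exists_clusterPt (f := map w l) (le_principal_iff.2 hwK)
  refine ⟨b, tendsto_order.2 ⟨fun a hab => ?_, fun a hba => ?_⟩⟩
  · obtain ⟨a', haa', ha'b⟩ := exists_between hab
    refine (h a').resolve_left (fun hle => ?_) |>.mono fun s hs => haa'.trans_le hs
    have hba' : b ≤ a' := (closure_Iic a').subset (hb.mem_closure_of_mem _ hle)
    exact hba'.not_gt ha'b
  · obtain ⟨a', hba', ha'a⟩ := exists_between hba
    refine (h a').resolve_right (fun hge => ?_) |>.mono fun s hs => hs.trans_lt ha'a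
    have ha'b : a' ≤ b := (closure_Ici a').subset (hb.mem_closure_of_mem _ hge)
    exact ha'b.not_gt hba'

theorem eventually_pos_or_eventually_neg_nhdsLT_of_ne_zero {L : ℝ} {h : ℝ → ℝ}
    (hc : ∀ᶠ s in 𝓝[<] L, ContinuousAt h s) (hne : ∀ᶠ s in 𝓝[<] L, h s ≠ 0) :
    (∀ᶠ s in 𝓝[<] L, 0 < h s) ∨ (∀ᶠ s in 𝓝[<] L, h s < 0) := by
  obtain ⟨a, haL, hsub⟩ := mem_nhdsLT_iff_exists_Ioo_subset.1 (hc.and hne)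
  have hconn : IsPreconnected (h '' Ioo a L) :=
    isPreconnected_Ioo.image h fun x hx => (hsub hx).1.continuousWithinAt
  have hcover : h '' Ioo a L ⊆ Ioi 0 ∪ Iio 0 := by
    rintro _ ⟨x, hx, rfl⟩
    exact (hsub hx).2.lt_or_gt.symm
  rcases hconn.subset_or_subset isOpen_Ioi isOpen_Iio Ioi_disjoint_Iio_same hcover with
    hpos | hneg
  · exact .inl (mem_of_superset (Ioo_mem_nhdsLT haL) fun s hs => hpos (mem_image_of_mem h hs))
  · exact .inr (mem_of_superset (Ioo_mem_nhdsLT haL) fun s hs => hneg (mem_image_of_mem h hs))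

theorem exists_tendsto_of_tendsto_sq {ι : Type*} {l : Filter ι} {w : ι → ℝ} {β : ℝ}
    (hsq : Tendsto (fun s => w s ^ 2) l (𝓝 β))
    (hsign : (∀ᶠ s in l, w s ≤ 0) ∨ (∀ᶠ s in l, 0 ≤ w s)) :
    ∃ b, Tendsto w l (𝓝 b) := by
  have habs : Tendsto (fun s => |w s|) l (𝓝 √β) := by
    simpa only [Real.sqrt_sq_eq_abs] using hsq.sqrt
  rcases hsign with hneg | hpos
  · exact ⟨-√β, habs.neg.congr' (hneg.mono fun s hs => by simp [abs_of_nonpos hs])⟩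
  · exact ⟨√β, habs.congr' (hpos.mono fun s hs => abs_of_nonneg hs)⟩

section InnerProductSpace

variable {E : Type*} [NormedAddCommGroup E] [InnerProductSpace ℝ E]

theorem AnalyticAt.inner {g h : E → E} {x : E} (hg : AnalyticAt ℝ g x)
    (hh : AnalyticAt ℝ h x) : AnalyticAt ℝ (fun y => ⟪g y, h y⟫) x :=
  ((innerSL ℝ).analyticAt_bilinear (g x, h x)).comp₂ hg hh

variable [FiniteDimensional ℝ E]

theorem AnalyticOnNhd.gradient {f : E → ℝ} {U : Set E} (hf : AnalyticOnNhd ℝ f U) :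
    AnalyticOnNhd ℝ (gradient f) U := by
  let b := stdOrthonormalBasis ℝ E
  have hexpand : _root_.gradient f = fun y => ∑ i, fderiv ℝ f y (b i) • b i := by
    ext1 y
    conv_lhs => rw [← b.sum_repr' (_root_.gradient f y)]
    simp only [real_inner_comm, inner_gradient_left]
  rw [hexpand]
  intro x hx
  refine Finset.analyticAt_fun_sum _ fun i _ => ?_
  exact (((ContinuousLinearMap.apply ℝ ℝ (b i)).analyticAt _).comp (hf.fderiv x hx)).smul
    analyticAt_const

theorem exists_tendsto_of_forall_exists_tendsto_inner {ι : Type*} {l : Filter ι} {w : ι → E}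
    (h : ∀ v, ∃ c, Tendsto (fun s => ⟪w s, v⟫) l (𝓝 c)) : ∃ m, Tendsto w l (𝓝 m) := by
  let b := stdOrthonormalBasis ℝ E
  choose c hc using h
  refine ⟨∑ i, c (b i) • b i, ?_⟩
  have hexpand : w = fun s => ∑ i, ⟪w s, b i⟫ • b i :=
    funext fun s => by simpa only [real_inner_comm] using (b.sum_repr' (w s)).symm
  rw [hexpand]
  exact tendsto_finsetSum _ fun i _ => (hc (b i)).smul_const _

end InnerProductSpace

def NonOscillating {E : Type*} [NormedAddCommGroup E] [NormedSpace ℝ E] (γ : ℝ → E) (L : ℝ) :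
    Prop :=
  ∀ g : E → ℝ, AnalyticAt ℝ g 0 →
    (∀ᶠ s in 𝓝[<] L, g (γ s) = 0) ∨ (∀ᶠ s in 𝓝[<] L, g (γ s) ≠ 0)

namespace NonOscillating

section NormedSpace

variable {F : Type*} [NormedAddCommGroup F] [NormedSpace ℝ F] {γ : ℝ → F} {L : ℝ} {U : Set F}

theorem eventually_nonpos_or_nonneg (hγ : NonOscillating γ L) (h0U : 0 ∈ U)
    (hγU : ∀ᶠ s in 𝓝[<] L, γ s ∈ U) (hγc : ∀ᶠ s in 𝓝[<] L, ContinuousAt γ s)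
    {A : F → ℝ} (hA : AnalyticOnNhd ℝ A U) :
    (∀ᶠ s in 𝓝[<] L, A (γ s) ≤ 0) ∨ (∀ᶠ s in 𝓝[<] L, 0 ≤ A (γ s)) := by
  rcases hγ A (hA 0 h0U) with hzero | hne
  · exact .inl (hzero.mono fun s hs => hs.le)
  · have hc : ∀ᶠ s in 𝓝[<] L, ContinuousAt (A ∘ γ) s :=
      (hγU.and hγc).mono fun s hs => (hA _ hs.1).continuousAt.comp hs.2
    exact (eventually_pos_or_eventually_neg_nhdsLT_of_ne_zero hc hne).symm.imp
      (·.mono fun _ => le_of_lt) (·.mono fun _ => le_of_lt)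

theorem exists_tendsto_div (hγ : NonOscillating γ L) (h0U : 0 ∈ U)
    (hγU : ∀ᶠ s in 𝓝[<] L, γ s ∈ U) (hγc : ∀ᶠ s in 𝓝[<] L, ContinuousAt γ s)
    {A B : F → ℝ} (hA : AnalyticOnNhd ℝ A U) (hB : AnalyticOnNhd ℝ B U)
    (hBpos : ∀ᶠ s in 𝓝[<] L, 0 < B (γ s)) {K : Set ℝ} (hK : IsCompact K)
    (hAB : ∀ᶠ s in 𝓝[<] L, A (γ s) / B (γ s) ∈ K) :
    ∃ b, Tendsto (fun s => A (γ s) / B (γ s)) (𝓝[<] L) (𝓝 b) := by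
  refine exists_tendsto_of_forall_eventually_le_or_ge hK hAB fun c => ?_
  have hsub : AnalyticOnNhd ℝ (fun y => A y - c * B y) U :=
    fun x hx => (hA x hx).sub (analyticAt_const.mul (hB x hx))
  refine (hγ.eventually_nonpos_or_nonneg h0U hγU hγc hsub).imp
    (fun h => (h.and hBpos).mono fun s hs => ?_) (fun h => (h.and hBpos).mono fun s hs => ?_)
  · exact (div_le_iff₀ hs.2).2 (by linarith [hs.1])
  · exact (le_div_iff₀ hs.2).2 (by linarith [hs.1])

end NormedSpace

variable {E : Type*} [NormedAddCommGroup E] [InnerProductSpace ℝ E] [FiniteDimensional ℝ E]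
  {γ : ℝ → E} {L : ℝ} {U : Set E}

theorem exists_tendsto_normalized (hγ : NonOscillating γ L) (h0U : 0 ∈ U)
    (hγU : ∀ᶠ s in 𝓝[<] L, γ s ∈ U) (hγc : ∀ᶠ s in 𝓝[<] L, ContinuousAt γ s)
    {G : E → E} (hG : AnalyticOnNhd ℝ G U) (hG0 : ∀ᶠ s in 𝓝[<] L, G (γ s) ≠ 0) :
    ∃ m, Tendsto (fun s => ‖G (γ s)‖⁻¹ • G (γ s)) (𝓝[<] L) (𝓝 m) := by
  refine exists_tendsto_of_forall_exists_tendsto_inner fun v => ?_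
  have hinner (y : E) : ⟪‖G y‖⁻¹ • G y, v⟫ = ‖G y‖⁻¹ * ⟪G y, v⟫ := real_inner_smul_left ..
  have hsq (y : E) : ⟪‖G y‖⁻¹ • G y, v⟫ ^ 2 = ⟪G y, v⟫ ^ 2 / ⟪G y, G y⟫ := by
    rw [hinner, real_inner_self_eq_norm_sq, mul_pow, inv_pow, inv_mul_eq_div]
  have hGv : AnalyticOnNhd ℝ (fun y => ⟪G y, v⟫) U :=
    fun x hx => (hG x hx).inner analyticAt_const
  have hGG : AnalyticOnNhd ℝ (fun y => ⟪G y, G y⟫) U := fun x hx => (hG x hx).inner (hG x hx)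
  have hpos : ∀ᶠ s in 𝓝[<] L, 0 < ⟪G (γ s), G (γ s)⟫ :=
    hG0.mono fun s hs => real_inner_self_pos.2 hs
  have hbound : ∀ᶠ s in 𝓝[<] L, ⟪G (γ s), v⟫ ^ 2 / ⟪G (γ s), G (γ s)⟫ ∈ Icc 0 ⟪v, v⟫ :=
    hpos.mono fun s hs => ⟨div_nonneg (sq_nonneg _) hs.le,
      (div_le_iff₀ hs).2 (by nlinarith [real_inner_mul_inner_self_le (G (γ s)) v])⟩
  obtain ⟨β, hβ⟩ := hγ.exists_tendsto_div h0U hγU hγc (A := fun y => ⟪G y, v⟫ ^ 2)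
    (fun x hx => (hGv x hx).pow 2) hGG hpos isCompact_Icc hbound
  refine exists_tendsto_of_tendsto_sq (hβ.congr fun s => (hsq _).symm) ?_
  refine (hγ.eventually_nonpos_or_nonneg h0U hγU hγc hGv).imp
    (·.mono fun s hs => ?_) (·.mono fun s hs => ?_)
  · rw [hinner]; exact mul_nonpos_of_nonneg_of_nonpos (by positivity) hs
  · rw [hinner]; exact mul_nonneg (by positivity) hs

end NonOscillating

section Slope

variable {F : Type*} [NormedAddCommGroup F] [NormedSpace ℝ F] {γ u : ℝ → F} {L : ℝ} {m : F}

theorem tendsto_slope_nhdsLT_of_tendsto_deriv (hd : ∀ᶠ s in 𝓝[<] L, HasDerivAt γ (u s) s)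
    (hu : Tendsto u (𝓝[<] L) (𝓝 m)) (hγ : Tendsto γ (𝓝[<] L) (𝓝 0)) :
    Tendsto (fun s => (s - L)⁻¹ • γ s) (𝓝[<] L) (𝓝 m) := by
  classical
  obtain ⟨a, haL, hsub⟩ := mem_nhdsLT_iff_exists_Ioo_subset.1 hd
  -- `γ L` is arbitrary; the one-sided derivative at `L` is taken of `γ` extended by `0` there.
  set γ₀ := Function.update γ L 0
  have hd₀ : ∀ s ∈ Ioo a L, HasDerivAt γ₀ (u s) s := fun s hs =>
    (hsub hs).congr_of_eventuallyEq
      ((eventually_ne_nhds hs.2.ne).mono fun t ht => Function.update_of_ne ht _ _)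
  have hderiv : deriv γ₀ =ᶠ[𝓝[<] L] u :=
    mem_of_superset (Ioo_mem_nhdsLT haL) fun s hs => (hd₀ s hs).deriv
  have hγ₀ : HasDerivWithinAt γ₀ m (Iic L) L :=
    hasDerivWithinAt_Iic_of_tendsto_deriv
      (fun s hs => (hd₀ s hs).differentiableAt.differentiableWithinAt)
      (continuousWithinAt_update_same.2 (hγ.mono_left (nhdsWithin_mono _ fun s hs => hs.1.2)))
      (Ioo_mem_nhdsLT haL) (hu.congr' hderiv.symm)
  rw [hasDerivWithinAt_iff_tendsto_slope, Iic_sdiff_right] at hγ₀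
  refine hγ₀.congr' (eventually_nhdsWithin_of_forall fun s hs => ?_)
  simp only [slope_def_module, γ₀, Function.update_self, Function.update_of_ne (mem_Iio.1 hs).ne,
    sub_zero]

theorem tendsto_normalized_nhdsLT_of_tendsto_deriv (hd : ∀ᶠ s in 𝓝[<] L, HasDerivAt γ (u s) s)
    (hu : Tendsto u (𝓝[<] L) (𝓝 m)) (hγ : Tendsto γ (𝓝[<] L) (𝓝 0)) (hm : m ≠ 0) :
    Tendsto (fun s => ‖γ s‖⁻¹ • γ s) (𝓝[<] L) (𝓝 (-(‖m‖⁻¹ • m))) := by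
  have hslope := tendsto_slope_nhdsLT_of_tendsto_deriv hd hu hγ
  refine ((hslope.norm.inv₀ (norm_ne_zero_iff.2 hm)).smul hslope).neg.congr'
    (eventually_nhdsWithin_of_forall fun s hs => ?_)
  have hc : (s - L)⁻¹ < 0 := inv_lt_zero.2 (sub_neg.2 hs)
  rw [norm_smul, Real.norm_eq_abs, abs_of_neg hc, smul_smul, ← neg_smul, mul_inv,
    mul_right_comm, inv_neg, neg_mul, inv_mul_cancel₀ hc.ne, neg_one_mul, neg_neg]

end Slope

theorem unit_gradient_tendsto_neg_limit_of_secants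
    {n : ℕ}
    (U : Set (EuclideanSpace ℝ (Fin n)))
    (hOU : (0 : EuclideanSpace ℝ (Fin n)) ∈ U)
    (f : EuclideanSpace ℝ (Fin n) → ℝ)
    (hfan : AnalyticOnNhd ℝ f U)
    (L : ℝ) (hL : 0 < L)
    (γ : ℝ → EuclideanSpace ℝ (Fin n))
    (hγU : ∀ s ∈ Set.Ico (0 : ℝ) L, γ s ∈ U)
    (hγreg : ∀ s ∈ Set.Ico (0 : ℝ) L, gradient f (γ s) ≠ 0)
    (hγode : ∀ s ∈ Set.Ico (0 : ℝ) L,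
      HasDerivAt γ (‖gradient f (γ s)‖⁻¹ • gradient f (γ s)) s)
    (hγlim : Tendsto γ (𝓝[<] L) (𝓝 0))
    (hosc : ∀ g : EuclideanSpace ℝ (Fin n) → ℝ, AnalyticAt ℝ g 0 →
      (∀ᶠ s in 𝓝[<] L, g (γ s) = 0) ∨ (∀ᶠ s in 𝓝[<] L, g (γ s) ≠ 0))
    (ν : EuclideanSpace ℝ (Fin n))
    (hνlim : Tendsto (fun s => ‖γ s‖⁻¹ • γ s) (𝓝[<] L) (𝓝 ν))
    :
    Tendsto (fun s => ‖gradient f (γ s)‖⁻¹ • gradient f (γ s)) (𝓝[<] L) (𝓝 (-ν)) := by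
  have hnear : ∀ᶠ s in 𝓝[<] L, s ∈ Ico 0 L :=
    mem_of_superset (Ioo_mem_nhdsLT hL) Ioo_subset_Ico_self
  have hode := hnear.mono hγode
  obtain ⟨m, hm⟩ := NonOscillating.exists_tendsto_normalized hosc hOU (hnear.mono hγU)
    (hode.mono fun s hs => hs.continuousAt) hfan.gradient (hnear.mono hγreg)
  have hm1 : ‖m‖ = 1 := tendsto_nhds_unique hm.norm <| tendsto_const_nhds.congr' <|
    (hnear.mono hγreg).mono fun s hs => (norm_smul_inv_norm hs).symm
  have hsec := tendsto_normalized_nhdsLT_of_tendsto_deriv hode hm hγlim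
    (norm_ne_zero_iff.1 (hm1 ▸ one_ne_zero))
  rw [hm1, inv_one, one_smul] at hsec
  rwa [tendsto_nhds_unique hνlim hsec, neg_neg]
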